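/- arXiv:2308.04531 — 8 statements merged into one kernel-verified Lean document; each statement's English description precedes it below -/
import Mathlib

section
/- Let Σ be a 𝒱-enriched 𝒮-sorted signature with underlying classical 𝒮-sorted signature |Σ|. Then the faithful functor |-|^Σ : Σ-Alg → |Σ|-Alg is topological (every |-|^Σ-structured source has an initial lift), and the forgetful functor U^Σ : Σ-Alg → 𝒱^𝒮 sends |-|^Σ-initial sources to |-|^𝒮-initial sources. -/
universe u

/-- A topological construct over `Set`: an amnestic concrete category over types,
presented by a class of structures on each type together with an admissibility
predicate on functions, in which every structured source has an initial lift and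
every structured sink has a final lift (index types in `Type (u+1)` suffice for
all the "large" sources/sinks we consider). -/
structure TopConstruct : Type (u + 2) where
  Str : Type u → Type (u + 1)
  Adm : ∀ {X Y : Type u}, Str X → Str Y → (X → Y) → Prop
  adm_id : ∀ {X : Type u} (s : Str X), Adm s s id
  adm_comp : ∀ {X Y Z : Type u} {s : Str X} {t : Str Y} {r : Str Z} {f : X → Y} {g : Y → Z},
    Adm s t f → Adm t r g → Adm s r (g ∘ f)
  amnestic : ∀ {X : Type u} (s t : Str X), Adm s t id → Adm t s id → s = t
  iLift : ∀ {X : Type u} {I : Type (u + 1)} (T : I → Type u) (t : ∀ i, Str (T i))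
    (f : ∀ i, X → T i), Str X
  iLift_adm : ∀ {X : Type u} {I : Type (u + 1)} (T : I → Type u) (t : ∀ i, Str (T i))
    (f : ∀ i, X → T i) (i : I), Adm (iLift T t f) (t i) (f i)
  iLift_initial : ∀ {X : Type u} {I : Type (u + 1)} (T : I → Type u) (t : ∀ i, Str (T i))
    (f : ∀ i, X → T i) {W : Type u} (w : Str W) (g : W → X),
    (∀ i, Adm w (t i) (fun x => f i (g x))) → Adm w (iLift T t f) g
  fLift : ∀ {X : Type u} {I : Type (u + 1)} (T : I → Type u) (t : ∀ i, Str (T i))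
    (f : ∀ i, T i → X), Str X
  fLift_adm : ∀ {X : Type u} {I : Type (u + 1)} (T : I → Type u) (t : ∀ i, Str (T i))
    (f : ∀ i, T i → X) (i : I), Adm (t i) (fLift T t f) (f i)
  fLift_final : ∀ {X : Type u} {I : Type (u + 1)} (T : I → Type u) (t : ∀ i, Str (T i))
    (f : ∀ i, T i → X) {W : Type u} (w : Str W) (g : X → W),
    (∀ i, Adm (t i) w (fun x => g (f i x))) → Adm (fLift T t f) w g

namespace TopConstruct

variable (V : TopConstruct.{u})

/-- The objects of the topological category `V`. -/
def Obj : Type (u + 1) := Σ X : Type u, V.Str X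

/-- The fibre (partial) order over a fixed underlying set. -/
def fibLe {X : Type u} (s t : V.Str X) : Prop := V.Adm s t id

/-- Infima in the fibres (initial lift of a structured source of identities). -/
def fibInf {X : Type u} {I : Type (u + 1)} (s : I → V.Str X) : V.Str X :=
  V.iLift (fun _ => X) s fun _ => id

/-- Suprema in the fibres (final lift of a structured sink of identities). -/
def fibSup {X : Type u} {I : Type (u + 1)} (s : I → V.Str X) : V.Str X :=
  V.fLift (fun _ => X) s fun _ => id

/-- Binary suprema in the fibres. -/
def fibSup2 {X : Type u} (s t : V.Str X) : V.Str X :=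
  V.fibSup fun b : ULift.{u + 1} Bool => bif b.down then s else t

/-- Initial lift of a single structured map. -/
def iLift1 {X Y : Type u} (t : V.Str Y) (f : X → Y) : V.Str X :=
  V.iLift (I := PUnit.{u + 2}) (fun _ => Y) (fun _ => t) fun _ => f

/-- Final lift of a single structured map. -/
def fLift1 {X Y : Type u} (t : V.Str X) (f : X → Y) : V.Str Y :=
  V.fLift (I := PUnit.{u + 2}) (fun _ => X) (fun _ => t) fun _ => f

/-- The indiscrete structure (top of the fibre). -/
def indisc (X : Type u) : V.Str X :=
  V.iLift (I := PEmpty.{u + 2}) (fun e => e.elim) (fun e => e.elim) fun e => e.elim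

/-- The discrete structure (bottom of the fibre). -/
def disc (X : Type u) : V.Str X :=
  V.fLift (I := PEmpty.{u + 2}) (fun e => e.elim) (fun e => e.elim) fun e => e.elim

/-- The product structure on a finitely-indexed (or any `Type 0`-indexed) family. -/
def piStrF {I : Type} {T : I → Type u} (t : ∀ i, V.Str (T i)) : V.Str (∀ i, T i) :=
  V.iLift (I := ULift.{u + 1} I) (fun i => T i.down) (fun i => t i.down) fun i g => g i.down

/-- The product structure on a `Type u`-indexed family. -/
def piStrU {I : Type u} {T : I → Type u} (t : ∀ i, V.Str (T i)) : V.Str (∀ i, T i) :=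
  V.iLift (I := ULift.{u + 1} I) (fun i => T i.down) (fun i => t i.down) fun i g => g i.down

/-- The binary (cartesian) product structure. -/
def prodStr {X Y : Type u} (s : V.Str X) (t : V.Str Y) : V.Str (X × Y) :=
  V.iLift (I := ULift.{u + 1} Bool) (fun b => Bool.rec Y X b.down)
    (fun b => Bool.rec (motive := fun c => V.Str (Bool.rec Y X c)) t s b.down)
    (fun b => Bool.rec (motive := fun c => X × Y → Bool.rec Y X c) Prod.snd Prod.fst b.down)

end TopConstruct

/-- Cartesian closedness of a topological construct, witnessed concretely:
each hom-set carries an exponential structure for which admissibility of a map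
into the exponential is equivalent to admissibility of its uncurrying. -/
structure CartesianClosed (V : TopConstruct.{u}) : Type (u + 1) where
  exp : ∀ {X Y : Type u} (s : V.Str X) (t : V.Str Y), V.Str {f : X → Y // V.Adm s t f}
  adm_curry_iff : ∀ {X Y Z : Type u} (s : V.Str X) (t : V.Str Y) (c : V.Str Z)
    (g : Z → {f : X → Y // V.Adm s t f}),
    V.Adm c (exp s t) g ↔ V.Adm (V.prodStr c s) t fun p => (g p.1).1 p.2

/-- A symmetric monoidal structure on a topological construct `V` for which the
forgetful functor to `Set` is strict symmetric monoidal with respect to the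
cartesian structure on `Set`. -/
structure MonStr (V : TopConstruct.{u}) : Type (u + 1) where
  tens : ∀ {X Y : Type u}, V.Str X → V.Str Y → V.Str (X × Y)
  unitStr : V.Str PUnit.{u + 1}
  tens_adm : ∀ {X X' Y Y' : Type u} {s : V.Str X} {s' : V.Str X'} {t : V.Str Y} {t' : V.Str Y'}
    {f : X → X'} {g : Y → Y'}, V.Adm s s' f → V.Adm t t' g →
    V.Adm (tens s t) (tens s' t') (Prod.map f g)
  swap_adm : ∀ {X Y : Type u} (s : V.Str X) (t : V.Str Y), V.Adm (tens s t) (tens t s) Prod.swap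
  assoc_adm : ∀ {X Y Z : Type u} (s : V.Str X) (t : V.Str Y) (r : V.Str Z),
    V.Adm (tens (tens s t) r) (tens s (tens t r)) fun p => (p.1.1, (p.1.2, p.2))
  assoc_inv_adm : ∀ {X Y Z : Type u} (s : V.Str X) (t : V.Str Y) (r : V.Str Z),
    V.Adm (tens s (tens t r)) (tens (tens s t) r) fun p => ((p.1, p.2.1), p.2.2)
  lunit_adm : ∀ {X : Type u} (s : V.Str X), V.Adm (tens unitStr s) s Prod.snd
  lunit_inv_adm : ∀ {X : Type u} (s : V.Str X), V.Adm s (tens unitStr s) fun x => (PUnit.unit, x)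
  runit_adm : ∀ {X : Type u} (s : V.Str X), V.Adm (tens s unitStr) s Prod.fst
  runit_inv_adm : ∀ {X : Type u} (s : V.Str X), V.Adm s (tens s unitStr) fun x => (x, PUnit.unit)

/-- The statement that the symmetric monoidal structure `M` is the cartesian one. -/
def MonStr.IsCartesian {V : TopConstruct.{u}} (M : MonStr V) : Prop :=
  (∀ {X Y : Type u} (s : V.Str X) (t : V.Str Y), M.tens s t = V.prodStr s t) ∧
    M.unitStr = V.indisc PUnit.{u + 1}
universe v

/-- A classical `S`-sorted signature. -/
structure ClassSig (S : Type u) : Type (u + 1) where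
  Op : Type u
  ar : Op → List S
  out : Op → S

/-- A classical `S`-sorted algebra (in `Set`) for a classical signature. -/
structure ClassAlg {S : Type u} (Sg : ClassSig S) : Type (u + 1) where
  car : S → Type u
  op : ∀ σ : Sg.Op, (∀ i : Fin (Sg.ar σ).length, car ((Sg.ar σ).get i)) → car (Sg.out σ)

/-- A morphism of classical algebras. -/
def IsClsHom {S : Type u} {Sg : ClassSig S} (A B : ClassAlg Sg)
    (h : ∀ s, A.car s → B.car s) : Prop :=
  ∀ (σ : Sg.Op) (ts : ∀ i : Fin (Sg.ar σ).length, A.car ((Sg.ar σ).get i)),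
    h _ (A.op σ ts) = B.op σ fun i => h _ (ts i)

/-- Ground terms over a classical signature with constants from `X`. -/
inductive Tm {S : Type u} (Sg : ClassSig S) (X : S → Type v) : S → Type (max u v)
  | var {s : S} : X s → Tm Sg X s
  | app (σ : Sg.Op) (ts : ∀ i : Fin (Sg.ar σ).length, Tm Sg X ((Sg.ar σ).get i)) :
      Tm Sg X (Sg.out σ)

/-- The term algebra (the free classical algebra) on an `S`-sorted set. -/
def termAlg {S : Type u} (Sg : ClassSig S) (X : S → Type u) : ClassAlg Sg :=
  ⟨Tm Sg X, fun σ ts => .app σ ts⟩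

/-- The unique extension of `f` to a homomorphism out of the term algebra
(the adjoint transpose `f^♯`). -/
def Tm.extend {S : Type u} {Sg : ClassSig S} {X : S → Type v} (B : ClassAlg Sg)
    (f : ∀ s, X s → B.car s) : ∀ {s : S}, Tm Sg X s → B.car s
  | _, .var x => f _ x
  | _, .app σ ts => B.op σ fun i => Tm.extend B f (ts i)

/-- Variables of a context: positions of the context list of the given sort. -/
def CtxVar {S : Type u} (Γ : List S) (s : S) : Type := {i : Fin Γ.length // Γ.get i = s}

/-- A syntactic equation in context over a classical signature. -/
structure SynEq {S : Type u} (Sg : ClassSig S) : Type u where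
  ctx : List S
  sort : S
  lhs : Tm Sg (CtxVar ctx) sort
  rhs : Tm Sg (CtxVar ctx) sort

/-- Interpretation of a term in context in a classical algebra at a valuation. -/
def ctxInterp {S : Type u} {Sg : ClassSig S} (B : ClassAlg Sg) {Γ : List S} {s : S}
    (t : Tm Sg (CtxVar Γ) s) (as : ∀ i : Fin Γ.length, B.car (Γ.get i)) : B.car s :=
  Tm.extend (X := CtxVar Γ) B (fun _ x => x.2 ▸ as x.1) t

/-- Satisfaction of a syntactic equation in context by a classical algebra. -/
def ClsSat {S : Type u} {Sg : ClassSig S} (B : ClassAlg Sg) (e : SynEq Sg) : Prop :=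
  ∀ as : ∀ i : Fin e.ctx.length, B.car (e.ctx.get i),
    ctxInterp B e.lhs as = ctxInterp B e.rhs as

/-- A congruence on a classical algebra. -/
def IsClsCong {S : Type u} {Sg : ClassSig S} (B : ClassAlg Sg)
    (r : ∀ s, B.car s → B.car s → Prop) : Prop :=
  (∀ s, Equivalence (r s)) ∧
    ∀ (σ : Sg.Op) (ts us : ∀ i : Fin (Sg.ar σ).length, B.car ((Sg.ar σ).get i)),
      (∀ i, r _ (ts i) (us i)) → r _ (B.op σ ts) (B.op σ us)

/-- The congruence on a classical algebra generated by a set of syntactic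
equations in context: the smallest congruence identifying the interpretations
of the two sides of each equation at all valuations. -/
def congGen {S : Type u} {Sg : ClassSig S} (B : ClassAlg Sg) (E : Set (SynEq Sg)) :
    ∀ s, B.car s → B.car s → Prop := fun s a b =>
  ∀ r : ∀ s, B.car s → B.car s → Prop, IsClsCong B r →
    (∀ e ∈ E, ∀ as, r e.sort (ctxInterp B e.lhs as) (ctxInterp B e.rhs as)) → r s a b

/-- A `V`-enriched `S`-sorted signature: operation symbols with input sorts,
an output sort and a parameter object of `V`. -/
structure VSig (V : TopConstruct.{u}) (S : Type u) : Type (u + 1) where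
  Op : Type u
  ar : Op → List S
  out : Op → S
  parC : Op → Type u
  parS : ∀ σ, V.Str (parC σ)

/-- The underlying classical `S`-sorted signature `|Σ|` of a `V`-enriched one:
one operation symbol `σ_p` for every `σ` and every point `p` of its parameter. -/
def VSig.toClass {V : TopConstruct.{u}} {S : Type u} (Sg : VSig V S) : ClassSig S where
  Op := Σ σ : Sg.Op, Sg.parC σ
  ar := fun σ => Sg.ar σ.1
  out := fun σ => Sg.out σ.1

/-- A `Σ`-algebra for a `V`-enriched `S`-sorted signature (relative to a
symmetric monoidal structure `M` on `V`): an `S`-sorted object of `V` equipped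
with an admissible operation `P ⊗ (A_{S₁} × ⋯ × A_{Sₙ}) → A_S` for each `σ`. -/
structure VAlg (V : TopConstruct.{u}) (M : MonStr V) {S : Type u} (Sg : VSig V S) :
    Type (u + 1) where
  car : S → Type u
  str : ∀ s, V.Str (car s)
  op : ∀ σ : Sg.Op,
    Sg.parC σ × (∀ i : Fin (Sg.ar σ).length, car ((Sg.ar σ).get i)) → car (Sg.out σ)
  op_adm : ∀ σ : Sg.Op,
    V.Adm (M.tens (Sg.parS σ) (V.piStrF fun i => str ((Sg.ar σ).get i))) (str (Sg.out σ)) (op σ)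

/-- The underlying classical `|Σ|`-algebra of a `Σ`-algebra. -/
def VAlg.cls {V : TopConstruct.{u}} {M : MonStr V} {S : Type u} {Sg : VSig V S}
    (A : VAlg V M Sg) : ClassAlg Sg.toClass :=
  ⟨A.car, fun σ ts => A.op σ.1 (σ.2, ts)⟩

/-- A morphism of `Σ`-algebras: an `S`-sorted admissible family commuting with
all the operations. -/
def IsVHom {V : TopConstruct.{u}} {M : MonStr V} {S : Type u} {Sg : VSig V S}
    (A B : VAlg V M Sg) (h : ∀ s, A.car s → B.car s) : Prop :=
  (∀ s, V.Adm (A.str s) (B.str s) (h s)) ∧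
    ∀ (σ : Sg.Op) (p : Sg.parC σ) (ts : ∀ i : Fin (Sg.ar σ).length, A.car ((Sg.ar σ).get i)),
      h _ (A.op σ (p, ts)) = B.op σ (p, fun i => h _ (ts i))
section Aux

variable (V : TopConstruct.{u}) (M : MonStr V) {S : Type u} (Sg : VSig V S)

/-- The pointwise initial-lift structure for a structured source over `|-|^Σ`. -/
def liftStr {car : S → Type u} {I : Type (u + 1)} (A : I → VAlg V M Sg)
    (f : ∀ i, ∀ s, car s → (A i).car s) (s : S) : V.Str (car s) :=
  V.iLift (fun i => (A i).car s) (fun i => (A i).str s) (fun i => f i s)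

lemma liftStr_adm {car : S → Type u} {I : Type (u + 1)} (A : I → VAlg V M Sg)
    (f : ∀ i, ∀ s, car s → (A i).car s) (i : I) (s : S) :
    V.Adm (liftStr V M Sg A f s) ((A i).str s) (f i s) :=
  V.iLift_adm (fun i => (A i).car s) (fun i => (A i).str s) (fun i => f i s) i

lemma liftStr_initial {car : S → Type u} {I : Type (u + 1)} (A : I → VAlg V M Sg)
    (f : ∀ i, ∀ s, car s → (A i).car s) {W : Type u} (w : V.Str W) {s : S}
    (g : W → car s) (h : ∀ i, V.Adm w ((A i).str s) fun x => f i s (g x)) :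
    V.Adm w (liftStr V M Sg A f s) g :=
  V.iLift_initial (fun i => (A i).car s) (fun i => (A i).str s) (fun i => f i s) w g h

lemma liftStr_op_adm (B₀ : ClassAlg Sg.toClass) {I : Type (u + 1)} (A : I → VAlg V M Sg)
    (f : ∀ i, ∀ s, B₀.car s → (A i).car s) (hf : ∀ i, IsClsHom B₀ (A i).cls (f i))
    (σ : Sg.Op) :
    V.Adm (M.tens (Sg.parS σ) (V.piStrF fun j => liftStr V M Sg A f ((Sg.ar σ).get j)))
      (liftStr V M Sg A f (Sg.out σ)) fun pts => B₀.op ⟨σ, pts.1⟩ pts.2 := by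
  apply liftStr_initial
  intro i
  have key : (fun pts : Sg.parC σ × (∀ j : Fin (Sg.ar σ).length, B₀.car ((Sg.ar σ).get j)) =>
      f i (Sg.out σ) (B₀.op ⟨σ, pts.1⟩ pts.2))
      = fun pts => (A i).op σ (pts.1, fun j => f i _ (pts.2 j)) := by
    funext pts
    exact hf i ⟨σ, pts.1⟩ pts.2
  rw [key]
  have hmap : V.Adm (V.piStrF fun j => liftStr V M Sg A f ((Sg.ar σ).get j))
      (V.piStrF fun j => (A i).str ((Sg.ar σ).get j))
      (fun ts j => f i ((Sg.ar σ).get j) (ts j)) := by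
    apply V.iLift_initial
    intro j
    exact V.adm_comp
      (show V.Adm (V.piStrF fun k => liftStr V M Sg A f ((Sg.ar σ).get k))
          (liftStr V M Sg A f ((Sg.ar σ).get j.down)) (fun ts => ts j.down) from
        V.iLift_adm _ _ _ j)
      (liftStr_adm V M Sg A f i ((Sg.ar σ).get j.down))
  exact V.adm_comp (M.tens_adm (V.adm_id _) hmap) ((A i).op_adm σ)

end Aux

/-- Let `Σ` be a `𝒱`-enriched `𝒮`-sorted signature with underlying
classical `𝒮`-sorted signature `|Σ|`. Then the faithful functor
`|-|^Σ : Σ-Alg → |Σ|-Alg` is topological (every `|-|^Σ`-structured source has an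
initial lift), and the forgetful functor `U^Σ : Σ-Alg → 𝒱^𝒮` sends `|-|^Σ`-initial
sources to `|-|^𝒮`-initial sources. -/
theorem statement0 (V : TopConstruct.{u}) (M : MonStr V) {S : Type u} (Sg : VSig V S) :
    -- (1) `|-|^Σ : Σ-Alg → |Σ|-Alg` is topological:
    -- every structured source over `|-|^Σ` has an initial lift
    (∀ (B₀ : ClassAlg Sg.toClass) (I : Type (u + 1)) (A : I → VAlg V M Sg)
      (f : ∀ i, ∀ s, B₀.car s → (A i).car s), (∀ i, IsClsHom B₀ (A i).cls (f i)) →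
      ∃ st : ∀ s, V.Str (B₀.car s),
        -- `st` makes `B₀` into a Σ-algebra `B` with `|B|^Σ = B₀`:
        (∀ σ : Sg.Op,
          V.Adm (M.tens (Sg.parS σ) (V.piStrF fun i => st ((Sg.ar σ).get i)))
            (st (Sg.out σ)) fun pts => B₀.op ⟨σ, pts.1⟩ pts.2) ∧
        -- each `f i` lifts to a morphism of Σ-algebras `B → A i`:
        (∀ i s, V.Adm (st s) ((A i).str s) (f i s)) ∧
        -- and the lifted source is `|-|^Σ`-initial:
        (∀ (W : VAlg V M Sg) (g : ∀ s, W.car s → B₀.car s), IsClsHom W.cls B₀ g →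
          (∀ i s, V.Adm (W.str s) ((A i).str s) fun x => f i s (g s x)) →
          ∀ s, V.Adm (W.str s) (st s) (g s))) ∧
    -- (2) `U^Σ` sends `|-|^Σ`-initial sources to `|-|^𝒮`-initial sources
    (∀ (A : VAlg V M Sg) (I : Type (u + 1)) (Ai : I → VAlg V M Sg)
      (f : ∀ i, ∀ s, A.car s → (Ai i).car s), (∀ i, IsVHom A (Ai i) (f i)) →
      -- if the source `(f i : A → Ai i)` is `|-|^Σ`-initial ...
      (∀ (W : VAlg V M Sg) (g : ∀ s, W.car s → A.car s), IsClsHom W.cls A.cls g →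
        (∀ i s, V.Adm (W.str s) ((Ai i).str s) fun x => f i s (g s x)) →
        ∀ s, V.Adm (W.str s) (A.str s) (g s)) →
      -- ... then its image under `U^Σ` is `|-|^𝒮`-initial:
      ∀ (W : S → V.Obj) (g : ∀ s, (W s).1 → A.car s),
        (∀ i s, V.Adm (W s).2 ((Ai i).str s) fun x => f i s (g s x)) →
        ∀ s, V.Adm (W s).2 (A.str s) (g s)) := by
  constructor
  · intro B₀ I A f hf
    refine ⟨liftStr V M Sg A f, liftStr_op_adm V M Sg B₀ A f hf,
      fun i s => liftStr_adm V M Sg A f i s, ?_⟩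
    intro W g _ hadm s
    exact liftStr_initial V M Sg A f (W.str s) (g s) (fun i => hadm i s)
  · intro A I Ai f hf hinit W g hadm s
    -- the pointwise initial lift of the source
    set st := liftStr V M Sg Ai (fun i s => f i s) with hst
    have hfcls : ∀ i, IsClsHom A.cls (Ai i).cls (f i) := by
      intro i σ ts
      exact (hf i).2 σ.1 σ.2 ts
    -- `st` carries a Σ-algebra structure on the carriers of `A`
    have hop := liftStr_op_adm V M Sg A.cls Ai (fun i s => f i s) hfcls
    let B : VAlg V M Sg := ⟨A.car, st, A.op, hop⟩
    -- the identity is a classical hom `B → A`, so by Σ-initiality `id` is admissible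
    have hid : ∀ s, V.Adm (st s) (A.str s) id := by
      apply hinit B (fun s => id)
      · intro σ ts; rfl
      · intro i s
        exact liftStr_adm V M Sg Ai (fun i s => f i s) i s
    have h1 : V.Adm (W s).2 (st s) (g s) :=
      liftStr_initial V M Sg Ai (fun i s => f i s) (W s).2 (g s) (fun i => hadm i s)
    have h2 := V.adm_comp h1 (hid s)
    exact h2
end

section
/- Let Σ be a 𝒱-enriched 𝒮-sorted signature with underlying classical 𝒮-sorted signature |Σ|. Then U^Σ : Σ-Alg → 𝒱^𝒮 has a left adjoint F^Σ : 𝒱^𝒮 → Σ-Alg, and the adjunction F^Σ ⊣ U^Σ is a lifting of the adjunction F^{|Σ|} ⊣ U^{|Σ|} : |Σ|-Alg → Set^𝒮; in particular |-|^Σ ∘ F^Σ = F^{|Σ|} ∘ |-|^𝒮 strictly. For each 𝒮-sorted object X of 𝒱, the free Σ-algebra F^Σ X is the domain of the initial lift of the |-|^Σ-structured source (f^♯ : F^{|Σ|}|X| → |A|^Σ) indexed by all pairs (A, f : X → U^Σ A) with A a Σ-algebra, where f^♯ is the adjoint transpose of f; in particular, the carrier U^Σ F^Σ X is the domain of the initial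 lift of the |-|^𝒮-structured source (f^♯ : Term_{|Σ|}(|X|) → |A|^𝒮) over the same index. -/
universe u

universe v

/-- The index family of the `|-|^Σ`-structured source of all adjoint transposes
`f^♯ : F^{|Σ|}|X| → |A|^Σ` of pairs `(A, f : X → U^Σ A)`. -/
def FreeSrc (V : TopConstruct.{u}) (M : MonStr V) {S : Type u} (Sg : VSig V S)
    (X : S → V.Obj) : Type (u + 1) :=
  (A : VAlg V M Sg) × {f : ∀ s, (X s).1 → A.car s // ∀ s, V.Adm (X s).2 (A.str s) (f s)}

/-- The domain of the initial lift of the `|-|^𝒮`-structured source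
`(f^♯ : Term_{|Σ|}(|X|) → |A|^𝒮)_{(A,f) ∈ X ↓ U^Σ}`. -/
def freeStr (V : TopConstruct.{u}) (M : MonStr V) {S : Type u} (Sg : VSig V S)
    (X : S → V.Obj) (s : S) : V.Str (Tm Sg.toClass (fun s => (X s).1) s) :=
  V.iLift (I := FreeSrc V M Sg X) (fun q => q.1.car s) (fun q => q.1.str s)
    fun q t => Tm.extend q.1.cls q.2.1 t

/-- `U^Σ : Σ-Alg → 𝒱^𝒮` has a left adjoint `F^Σ`, and
`F^Σ ⊣ U^Σ` is a lifting of `F^{|Σ|} ⊣ U^{|Σ|}`; in particular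
`|-|^Σ ∘ F^Σ = F^{|Σ|} ∘ |-|^𝒮` strictly.  The free `Σ`-algebra `F^Σ X` is the
domain of the initial lift of the `|-|^Σ`-structured source of transposes
`f^♯ : F^{|Σ|}|X| → |A|^Σ` over all `(A, f : X → U^Σ A)`, and its carrier
`U^Σ F^Σ X` is the domain of the initial lift of the `|-|^𝒮`-structured source
`(f^♯ : Term_{|Σ|}(|X|) → |A|^𝒮)` over the same index (the structure `freeStr`).
Concretely: the term-building operations and the unit are admissible for
`freeStr` (so `F^Σ X` strictly lifts the free `|Σ|`-algebra, i.e. the term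
algebra, on `|X|`), and for every `Σ`-algebra `A` and admissible
`f : X → U^Σ A` the transpose `f^♯` is admissible and is the unique morphism of
`Σ`-algebras `h : F^Σ X → A` with `U^Σ h ∘ η = f`. -/
theorem statement1 (V : TopConstruct.{u}) (M : MonStr V) {S : Type u} (Sg : VSig V S)
    (X : S → V.Obj) :
    -- the free `|Σ|`-algebra (the term algebra) on `|X|` lifts along `freeStr`,
    -- giving the strict lifting `|-|^Σ (F^Σ X) = F^{|Σ|} (|X|^𝒮)`:
    (∀ σ : Sg.Op,
      V.Adm (M.tens (Sg.parS σ) (V.piStrF fun i => freeStr V M Sg X ((Sg.ar σ).get i)))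
        (freeStr V M Sg X (Sg.out σ)) fun pts => Tm.app (Sg := Sg.toClass) ⟨σ, pts.1⟩ pts.2) ∧
    -- the unit `η : X → U^Σ F^Σ X` (sortwise inclusion of generators) is admissible:
    (∀ s, V.Adm (X s).2 (freeStr V M Sg X s) fun x => Tm.var x) ∧
    -- freeness (existence of the left adjoint `F^Σ` lifting `F^{|Σ|}`):
    ∀ (A : VAlg V M Sg) (f : ∀ s, (X s).1 → A.car s),
      (∀ s, V.Adm (X s).2 (A.str s) (f s)) →
      -- the transpose `f^♯` is admissible, ...
      (∀ s, V.Adm (freeStr V M Sg X s) (A.str s) fun t => Tm.extend A.cls f t) ∧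
      -- ... and is the unique morphism of Σ-algebras `h` with `h ∘ η = f`:
      ∀ h : ∀ s, Tm Sg.toClass (fun s => (X s).1) s → A.car s,
        (∀ s, V.Adm (freeStr V M Sg X s) (A.str s) (h s)) →
        (∀ (σ : Sg.Op) (p : Sg.parC σ)
          (ts : ∀ i : Fin (Sg.ar σ).length,
            Tm Sg.toClass (fun s => (X s).1) ((Sg.ar σ).get i)),
          h _ (Tm.app (Sg := Sg.toClass) ⟨σ, p⟩ ts) = A.op σ (p, fun i => h _ (ts i))) →
        (∀ s x, h s (Tm.var x) = f s x) →
        ∀ s t, h s t = Tm.extend A.cls f t := by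
  refine ⟨?_, ?_, ?_⟩
  · intro σ
    apply V.iLift_initial
    intro q
    have h1 : V.Adm (M.tens (Sg.parS σ) (V.piStrF fun i => freeStr V M Sg X ((Sg.ar σ).get i)))
        (M.tens (Sg.parS σ) (V.piStrF fun i => q.1.str ((Sg.ar σ).get i)))
        (Prod.map id fun ts i => Tm.extend q.1.cls q.2.1 (ts i)) := by
      apply M.tens_adm (V.adm_id _)
      apply V.iLift_initial
      intro i
      exact V.adm_comp (V.iLift_adm _ _ _ i) (V.iLift_adm _ _ _ q)
    exact V.adm_comp h1 (q.1.op_adm σ)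
  · intro s
    apply V.iLift_initial
    intro q
    exact q.2.2 s
  · intro A f hf
    refine ⟨fun s => V.iLift_adm (I := FreeSrc V M Sg X) _ _ _ ⟨A, f, hf⟩, ?_⟩
    intro h _ hop hvar s t
    induction t with
    | var x => exact hvar _ x
    | app σp ts ih =>
      obtain ⟨σ, p⟩ := σp
      rw [hop σ p ts]
      show A.op σ (p, fun i => h _ (ts i)) = A.op σ (p, fun i => Tm.extend A.cls f (ts i))
      congr 1
      exact Prod.ext rfl (funext ih)
end

section
/- Let Σ be a 𝒱-enriched 𝒮-sorted signature with underlying classical 𝒮-sorted signature |Σ|, let X be an 𝒮-sorted object of 𝒱, let A be a Σ-algebra and f : X → U^Σ A a 𝒱^𝒮-morphism, and let A_f denote the domain of the initial lift of the |-|^𝒮-structured morphism f^♯ : Term_{|Σ|}(|X|) → |A|^𝒮 (the adjoint transpose of f for the free |Σ|-algebra adjunction). Then A_f is Σ-compatible with X. -/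
universe u

universe v

/-- `Σ`-compatibility with `X` of an element `B` of the fibre of `𝒱^𝒮` over the
`𝒮`-sorted set `Term_{|Σ|}(|X|)` of ground `|Σ|`-terms with constants from `|X|`:
(1) the sortwise inclusion `η : |X| → Term_{|Σ|}(|X|)` lifts to a `𝒱^𝒮`-morphism
`X → B`, and (2) for each `σ ∈ Σ` of type `((S₁,…,Sₙ), S, P)`, the function
`(p, t₁,…,tₙ) ↦ σ_p(t₁,…,tₙ)` lifts to a `𝒱`-morphism
`P ⊗ (B_{S₁} × ⋯ × B_{Sₙ}) → B_S`. -/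
def SigCompat (V : TopConstruct.{u}) (M : MonStr V) {S : Type u} (Sg : VSig V S)
    (X : S → V.Obj) (B : ∀ s, V.Str (Tm Sg.toClass (fun s => (X s).1) s)) : Prop :=
  (∀ s, V.Adm (X s).2 (B s) fun x => Tm.var x) ∧
    ∀ σ : Sg.Op,
      V.Adm (M.tens (Sg.parS σ) (V.piStrF fun i => B ((Sg.ar σ).get i)))
        (B (Sg.out σ)) fun pts => Tm.app (Sg := Sg.toClass) ⟨σ, pts.1⟩ pts.2
/-- Given a `Σ`-algebra `A` and a `𝒱^𝒮`-morphism `f : X → U^Σ A`,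
the domain `A_f` of the initial lift of the `|-|^𝒮`-structured morphism
`f^♯ : Term_{|Σ|}(|X|) → |A|^𝒮` (the adjoint transpose of `f` for the free
`|Σ|`-algebra adjunction) is `Σ`-compatible with `X`. -/
theorem statement2 (V : TopConstruct.{u}) (M : MonStr V) {S : Type u} (Sg : VSig V S)
    (X : S → V.Obj) (A : VAlg V M Sg) (f : ∀ s, (X s).1 → A.car s)
    (hf : ∀ s, V.Adm (X s).2 (A.str s) (f s)) :
    SigCompat V M Sg X fun s => V.iLift1 (A.str s) fun t => Tm.extend A.cls f t := by
  constructor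
  · intro s
    exact V.iLift_initial _ _ _ _ _ fun _ => hf s
  · intro σ
    apply V.iLift_initial _ _ _ _ _ fun _ => ?_
    have hext : ∀ s, V.Adm (V.iLift1 (A.str s) fun t => Tm.extend A.cls f t) (A.str s)
        (fun t => Tm.extend A.cls f t) := fun s =>
      V.iLift_adm (I := PUnit.{u+2}) _ _ _ PUnit.unit
    have hpi : V.Adm (V.piStrF fun i => V.iLift1 (A.str ((Sg.ar σ).get i))
          fun t => Tm.extend A.cls f t)
        (V.piStrF fun i => A.str ((Sg.ar σ).get i))
        (fun g i => Tm.extend A.cls f (g i)) := by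
      apply V.iLift_initial
      intro i
      exact V.adm_comp (V.iLift_adm _ _ _ i) (hext _)
    have := V.adm_comp (M.tens_adm (V.adm_id (Sg.parS σ)) hpi) (A.op_adm σ)
    exact this
end

section
/- Let Σ be a 𝒱-enriched 𝒮-sorted signature with underlying classical 𝒮-sorted signature |Σ|, let 𝖾 be an algebraic Σ-equation with parameter object P, and let A be a Σ-algebra. Then A satisfies 𝖾 if and only if the underlying |Σ|-algebra |A| satisfies the ordinary algebraic |Σ|-equations 𝖾_p for all p ∈ |P|. -/
universe u

universe v

/-- The components of a candidate algebraic `Σ`-operation with input sorts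
`ins`, output sort `o` and parameter carrier `P`. -/
def OpFam (V : TopConstruct.{u}) (M : MonStr V) {S : Type u} (Sg : VSig V S)
    (ins : List S) (o : S) (P : Type u) : Type (u + 1) :=
  ∀ A : VAlg V M Sg, P × (∀ i : Fin ins.length, A.car (ins.get i)) → A.car o

/-- Admissibility of all components of a candidate algebraic `Σ`-operation. -/
def OpAdm {V : TopConstruct.{u}} {M : MonStr V} {S : Type u} {Sg : VSig V S}
    {ins : List S} {o : S} {P : Type u} (pS : V.Str P) (ω : OpFam V M Sg ins o P) : Prop :=
  ∀ A : VAlg V M Sg,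
    V.Adm (M.tens pS (V.piStrF fun i => A.str (ins.get i))) (A.str o) (ω A)

/-- Naturality of a candidate algebraic `Σ`-operation. -/
def OpNat {V : TopConstruct.{u}} {M : MonStr V} {S : Type u} {Sg : VSig V S}
    {ins : List S} {o : S} {P : Type u} (ω : OpFam V M Sg ins o P) : Prop :=
  ∀ (A B : VAlg V M Sg) (h : ∀ s, A.car s → B.car s), IsVHom A B h →
    ∀ (p : P) (ts : ∀ i : Fin ins.length, A.car (ins.get i)),
      h o (ω A (p, ts)) = ω B (p, fun i => h _ (ts i))

/-- An algebraic `Σ`-equation: a pair of algebraic `Σ`-operations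
(natural transformations `P ⊗ U^{S̄} ⟹ U^S`) of the same type. -/
structure AlgEq (V : TopConstruct.{u}) (M : MonStr V) {S : Type u} (Sg : VSig V S) :
    Type (u + 1) where
  ins : List S
  out : S
  parC : Type u
  parS : V.Str parC
  lhs : OpFam V M Sg ins out parC
  rhs : OpFam V M Sg ins out parC
  lhs_adm : OpAdm parS lhs
  rhs_adm : OpAdm parS rhs
  lhs_nat : OpNat lhs
  rhs_nat : OpNat rhs

/-- Satisfaction of an algebraic `Σ`-equation by a `Σ`-algebra. -/
def VSat {V : TopConstruct.{u}} {M : MonStr V} {S : Type u} {Sg : VSig V S}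
    (A : VAlg V M Sg) (e : AlgEq V M Sg) : Prop :=
  e.lhs A = e.rhs A

/-- The indiscrete `Σ`-algebra determined by a classical `|Σ|`-algebra. -/
def indiscAlg (V : TopConstruct.{u}) (M : MonStr V) {S : Type u} (Sg : VSig V S)
    (B : ClassAlg Sg.toClass) : VAlg V M Sg where
  car := B.car
  str := fun s => V.indisc (B.car s)
  op := fun σ pts => B.op ⟨σ, pts.1⟩ pts.2
  op_adm := fun σ => V.iLift_initial _ _ _ _ _ fun i => i.elim
/-- Let `𝖾` be an algebraic `Σ`-equation with parameter object `P`,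
and let `A` be a `Σ`-algebra.  Then `A` satisfies `𝖾` if and only if the underlying
`|Σ|`-algebra `|A|` satisfies the ordinary algebraic `|Σ|`-equations `𝖾_p` for all
`p ∈ |P|` (i.e. iff for every `p` the `p`-instances of the two sides agree on the
indiscrete `Σ`-algebra determined by `|A|`). -/
theorem statement7 (V : TopConstruct.{u}) (M : MonStr V) {S : Type u} (Sg : VSig V S)
    (e : AlgEq V M Sg) (A : VAlg V M Sg) :
    VSat A e ↔
      ∀ (p : e.parC) (ts : ∀ i : Fin e.ins.length, A.car (e.ins.get i)),
        e.lhs (indiscAlg V M Sg A.cls) (p, ts) = e.rhs (indiscAlg V M Sg A.cls) (p, ts) := by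
  have hhom : IsVHom A (indiscAlg V M Sg A.cls) (fun _ x => x) := by
    constructor
    · intro s
      exact V.iLift_initial _ _ _ _ _ (fun i => i.elim)
    · intro σ p ts; rfl
  have hl : ∀ p ts, e.lhs A (p, ts) = e.lhs (indiscAlg V M Sg A.cls) (p, ts) :=
    fun p ts => e.lhs_nat A _ _ hhom p ts
  have hr : ∀ p ts, e.rhs A (p, ts) = e.rhs (indiscAlg V M Sg A.cls) (p, ts) :=
    fun p ts => e.rhs_nat A _ _ hhom p ts
  constructor
  · intro h p ts
    rw [← hl, ← hr, h]
  · intro h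
    funext x
    obtain ⟨p, ts⟩ := x
    rw [hl, hr, h]
end

section
/- A 𝒱-enriched 𝒮-sorted equational theory is equivalently given by a 𝒱-enriched 𝒮-sorted signature Σ and a classical 𝒮-sorted equational theory over the underlying classical signature |Σ|. Precisely: (1) for every 𝒱-enriched 𝒮-sorted equational theory 𝒯 = (Σ, ℰ) there is a classical 𝒮-sorted equational theory |𝒯| = (|Σ|, |ℰ|) over |Σ| such that a Σ-algebra A is a 𝒯-algebra iff the underlying |Σ|-algebra |A| is a |𝒯|-algebra; (2) conversely, for every 𝒱-enriched 𝒮-sorted signature Σ and classical 𝒮-sorted equational theory 𝒯 = (|Σ|, ℰ) over |Σ| there is a 𝒱-enriched 𝒮-sorted equational theory 𝒯̂ = (Σ, ℰ̂) over Σ such that a Σ-algebra A is a 𝒯̂-algebra iff |A| is a 𝒯-algebra. -/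
universe u

universe v

/-! A natural family `ω` of operations is determined, at each parameter `p`, by a single term:
its value at the generic algebra (the indiscrete algebra of terms in context `Γ`) at the generic
valuation `i ↦ xᵢ`. Naturality along the two homomorphisms `A → indisc |A|` (the identity) and
`indisc (Terms Γ) → indisc |A|` (interpretation at a valuation) shows that `ω_A (p, -)` is the
interpretation of that term, so algebraic equations are sets of syntactic ones. Conversely, a term
in context with the discrete one-point parameter is admissible by induction on the term, and natural
because interpretation commutes with homomorphisms. -/

namespace TopConstruct

variable (V : TopConstruct.{u})

theorem adm_disc {X Y : Type u} (t : V.Str Y) (f : X → Y) : V.Adm (V.disc X) t f :=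
  V.fLift_final _ _ _ t f fun e => e.elim

theorem adm_indisc {X Y : Type u} (s : V.Str X) (g : X → Y) : V.Adm s (V.indisc Y) g :=
  V.iLift_initial _ _ _ s g fun e => e.elim

variable {V}

theorem adm_piStrF_eval {I : Type} {T : I → Type u} (t : ∀ i, V.Str (T i)) (i : I) :
    V.Adm (V.piStrF t) (t i) fun g => g i :=
  V.iLift_adm _ _ _ (ULift.up i)

theorem adm_piStrF_of_forall {I : Type} {T : I → Type u} (t : ∀ i, V.Str (T i)) {W : Type u}
    (w : V.Str W) (g : W → ∀ i, T i) (hg : ∀ i, V.Adm w (t i) fun x => g x i) :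
    V.Adm w (V.piStrF t) g :=
  V.iLift_initial _ _ _ w g fun i => hg i.down

end TopConstruct

namespace MonStr

variable {V : TopConstruct.{u}} (M : MonStr V)

theorem adm_snd_disc {X : Type u} (s : V.Str X) :
    V.Adm (M.tens (V.disc PUnit) s) s Prod.snd :=
  V.adm_comp (M.tens_adm (V.adm_disc _ id) (V.adm_id s)) (M.lunit_adm s)

/-- The discrete point is a comonoid: the diagonal of `V.disc PUnit` lets its factor be used
once for the constant and once for `f`. -/
theorem adm_const_pair {X Y P : Type u} {s : V.Str X} {t : V.Str Y} (pS : V.Str P) (c : P)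
    {f : PUnit × X → Y} (hf : V.Adm (M.tens (V.disc PUnit) s) t f) :
    V.Adm (M.tens (V.disc PUnit) s) (M.tens pS t) fun q => (c, f q) := by
  have hdiag : V.Adm (V.disc PUnit) (M.tens (V.disc PUnit) (V.disc PUnit)) fun x => (x, x) :=
    V.adm_disc _ _
  have h := V.adm_comp (V.adm_comp (M.tens_adm hdiag (V.adm_id s)) (M.assoc_adm _ _ _))
    (M.tens_adm (V.adm_disc pS fun _ => c) hf)
  exact h

end MonStr

section Classical

variable {S : Type u} {Sg : ClassSig S}

theorem IsClsHom.map_ctxInterp {B C : ClassAlg Sg} {h : ∀ s, B.car s → C.car s}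
    (hh : IsClsHom B C h) {Γ : List S} (as : ∀ i : Fin Γ.length, B.car (Γ.get i)) :
    ∀ {s : S} (t : Tm Sg (CtxVar Γ) s),
      h s (ctxInterp B t as) = ctxInterp C t fun i => h _ (as i)
  | _, .var ⟨_, rfl⟩ => rfl
  | _, .app σ ts =>
    (hh σ _).trans (congrArg (C.op σ) (funext fun i => hh.map_ctxInterp as (ts i)))

variable (Sg) in
/-- `termAlg` on the variables of `Γ`, which live in `Type` rather than `Type u`. -/
def ctxTermAlg (Γ : List S) : ClassAlg Sg :=
  ⟨Tm Sg (CtxVar Γ), fun σ ts => .app σ ts⟩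

theorem isClsHom_ctxInterp (B : ClassAlg Sg) {Γ : List S}
    (as : ∀ i : Fin Γ.length, B.car (Γ.get i)) :
    IsClsHom (ctxTermAlg Sg Γ) B fun _ t => ctxInterp B t as :=
  fun _ _ => rfl

end Classical

section Enriched

variable {V : TopConstruct.{u}} {M : MonStr V} {S : Type u} {Sg : VSig V S}

theorem IsVHom.isClsHom {A B : VAlg V M Sg} {h : ∀ s, A.car s → B.car s} (hh : IsVHom A B h) :
    IsClsHom A.cls B.cls h :=
  fun σ ts => hh.2 σ.1 σ.2 ts

theorem isVHom_indiscAlg {A : VAlg V M Sg} {B : ClassAlg Sg.toClass}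
    {h : ∀ s, A.car s → B.car s} (hh : IsClsHom A.cls B h) :
    IsVHom A (indiscAlg V M Sg B) h :=
  ⟨fun _ => V.adm_indisc _ _, fun σ p ts => hh ⟨σ, p⟩ ts⟩

variable (V M Sg) in
def genericAlg (Γ : List S) : VAlg V M Sg :=
  indiscAlg V M Sg (ctxTermAlg Sg.toClass Γ)

def OpFam.termOf {ins : List S} {o : S} {P : Type u} (ω : OpFam V M Sg ins o P) (p : P) :
    Tm Sg.toClass (CtxVar ins) o :=
  ω (genericAlg V M Sg ins) (p, fun i => .var ⟨i, rfl⟩)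

theorem OpNat.eq_ctxInterp_termOf {ins : List S} {o : S} {P : Type u}
    {ω : OpFam V M Sg ins o P} (hω : OpNat ω) (A : VAlg V M Sg) (p : P)
    (as : ∀ i : Fin ins.length, A.car (ins.get i)) :
    ω A (p, as) = ctxInterp A.cls (ω.termOf p) as :=
  (hω A (indiscAlg V M Sg A.cls) (fun _ x => x) (isVHom_indiscAlg fun _ _ => rfl) p as).trans
    (hω _ _ _ (isVHom_indiscAlg (A := genericAlg V M Sg ins) (isClsHom_ctxInterp A.cls as)) p
      fun i => .var ⟨i, rfl⟩).symm

def AlgEq.toSynEq (e : AlgEq V M Sg) (p : e.parC) : SynEq Sg.toClass :=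
  ⟨e.ins, e.out, e.lhs.termOf p, e.rhs.termOf p⟩

theorem vSat_iff_forall_clsSat_toSynEq (A : VAlg V M Sg) (e : AlgEq V M Sg) :
    VSat A e ↔ ∀ p, ClsSat A.cls (e.toSynEq p) := by
  simp only [VSat, ClsSat, AlgEq.toSynEq, funext_iff, Prod.forall,
    e.lhs_nat.eq_ctxInterp_termOf, e.rhs_nat.eq_ctxInterp_termOf]
  rfl

theorem ctxInterp_adm (A : VAlg V M Sg) {Γ : List S} :
    ∀ {s : S} (t : Tm Sg.toClass (CtxVar Γ) s),
      V.Adm (M.tens (V.disc PUnit) (V.piStrF fun i => A.str (Γ.get i))) (A.str s)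
        fun q => ctxInterp A.cls t q.2
  | _, .var ⟨i, rfl⟩ => V.adm_comp (M.adm_snd_disc _) (TopConstruct.adm_piStrF_eval _ i)
  | _, .app σ ts => by
    have hargs := TopConstruct.adm_piStrF_of_forall _ _ _ fun i => ctxInterp_adm A (ts i)
    have h := V.adm_comp (M.adm_const_pair _ σ.2 hargs) (A.op_adm σ.1)
    exact h

variable (V M) in
def SynEq.toAlgEq (e : SynEq Sg.toClass) : AlgEq V M Sg where
  ins := e.ctx
  out := e.sort
  parC := PUnit
  parS := V.disc PUnit
  lhs := fun A q => ctxInterp A.cls e.lhs q.2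
  rhs := fun A q => ctxInterp A.cls e.rhs q.2
  lhs_adm := fun A => ctxInterp_adm A e.lhs
  rhs_adm := fun A => ctxInterp_adm A e.rhs
  lhs_nat := fun _ _ _ hh _ as => hh.isClsHom.map_ctxInterp as e.lhs
  rhs_nat := fun _ _ _ hh _ as => hh.isClsHom.map_ctxInterp as e.rhs

theorem vSat_toAlgEq_iff (A : VAlg V M Sg) (e : SynEq Sg.toClass) :
    VSat A (e.toAlgEq V M) ↔ ClsSat A.cls e :=
  funext_iff.trans ⟨fun h as => h (PUnit.unit, as), fun h q => h q.2⟩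

end Enriched

/-- A `𝒱`-enriched `𝒮`-sorted equational theory is equivalently
given by a `𝒱`-enriched `𝒮`-sorted signature `Σ` and a classical `𝒮`-sorted
equational theory over `|Σ|`.  (1) For every set `ℰ` of algebraic `Σ`-equations
there is a set `|ℰ|` of syntactic `|Σ|`-equations in context such that a
`Σ`-algebra `A` is a `(Σ,ℰ)`-algebra iff `|A|` is a `(|Σ|,|ℰ|)`-algebra;
(2) conversely, for every set `ℰ` of syntactic `|Σ|`-equations in context there is
a set `ℰ̂` of algebraic `Σ`-equations such that a `Σ`-algebra `A` is a
`(Σ,ℰ̂)`-algebra iff `|A|` is a `(|Σ|,ℰ)`-algebra. -/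
theorem statement10 (V : TopConstruct.{u}) (M : MonStr V) {S : Type u} (Sg : VSig V S) :
    (∀ E : Set (AlgEq V M Sg), ∃ E' : Set (SynEq Sg.toClass),
      ∀ A : VAlg V M Sg, (∀ e ∈ E, VSat A e) ↔ ∀ e' ∈ E', ClsSat A.cls e') ∧
    (∀ E' : Set (SynEq Sg.toClass), ∃ E : Set (AlgEq V M Sg),
      ∀ A : VAlg V M Sg, (∀ e ∈ E, VSat A e) ↔ ∀ e' ∈ E', ClsSat A.cls e') := by
  refine ⟨fun E => ⟨{e' | ∃ e ∈ E, ∃ p, e.toSynEq p = e'}, fun A => ?_⟩,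
    fun E' => ⟨SynEq.toAlgEq V M '' E', fun A => ?_⟩⟩
  · simp only [vSat_iff_forall_clsSat_toSynEq]
    exact ⟨fun h _ ⟨e, he, p, hp⟩ => hp ▸ h e he p,
      fun h e he p => h _ ⟨e, he, p, rfl⟩⟩
  · simp only [Set.forall_mem_image, vSat_toAlgEq_iff]
end

section
/- Let 𝒯 = (Σ, ℰ) be a 𝒱-enriched 𝒮-sorted equational theory with underlying classical 𝒮-sorted equational theory |𝒯| = (|Σ|, |ℰ|). Then: the square of categories formed by the inclusion 𝒯-Alg ↪ Σ-Alg, the inclusion |𝒯|-Alg ↪ |Σ|-Alg, and the functors |-|^𝒯 : 𝒯-Alg → |𝒯|-Alg and |-|^Σ : Σ-Alg → |Σ|-Alg is a pullback in the category of categories; the faithful functor |-|^𝒯 : 𝒯-Alg → |𝒯|-Alg is topological; and the forgetful functor U^𝒯 : 𝒯-Alg → 𝒱^𝒮 sends |-|^𝒯-initial sources to |-|^𝒮-initial sources. -/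
universe u

universe v

-- aux lemma to prepend
theorem lift_op_adm (V : TopConstruct.{u}) (M : MonStr V) {S : Type u} (Sg : VSig V S)
    {I : Type (u + 1)} (B₀ : ClassAlg Sg.toClass) (A : I → VAlg V M Sg)
    (f : ∀ i, ∀ s, B₀.car s → (A i).car s) (hf : ∀ i, IsClsHom B₀ (A i).cls (f i))
    (σ : Sg.Op) :
    V.Adm (M.tens (Sg.parS σ)
        (V.piStrF fun j =>
          V.iLift (fun i : I => (A i).car ((Sg.ar σ).get j)) (fun i => (A i).str _)
            (fun i => f i _)))
      (V.iLift (fun i : I => (A i).car (Sg.out σ)) (fun i => (A i).str _) (fun i => f i _))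
      (fun pts => B₀.op ⟨σ, pts.1⟩ pts.2) := by
  apply V.iLift_initial
  intro i
  have heq : (fun pts : Sg.parC σ × (∀ j : Fin (Sg.ar σ).length, B₀.car ((Sg.ar σ).get j)) =>
      f i _ (B₀.op ⟨σ, pts.1⟩ pts.2)) =
      (fun pts => (A i).op σ (pts.1, fun j => f i _ (pts.2 j))) := by
    funext pts
    exact hf i ⟨σ, pts.1⟩ pts.2
  have hpi : V.Adm (V.piStrF fun j =>
      V.iLift (fun i' : I => (A i').car ((Sg.ar σ).get j)) (fun i' => (A i').str _)
        (fun i' => f i' _))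
      (V.piStrF fun j => (A i).str ((Sg.ar σ).get j))
      (fun ts j => f i _ (ts j)) := by
    apply V.iLift_initial
    intro j
    exact V.adm_comp (V.iLift_adm _ _ _ j) (V.iLift_adm _ _ _ i)
  exact heq.symm ▸ V.adm_comp (M.tens_adm (V.adm_id _) hpi) ((A i).op_adm σ)

/-- Let `𝒯 = (Σ, ℰ)` be a `𝒱`-enriched `𝒮`-sorted equational
theory with underlying classical theory `|𝒯| = (|Σ|, |ℰ|)` (characterized by: a
`Σ`-algebra `A` is a `𝒯`-algebra iff `|A|` is a `|𝒯|`-algebra).  Then the square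
formed by the inclusions `𝒯-Alg ↪ Σ-Alg`, `|𝒯|-Alg ↪ |Σ|-Alg` and the functors
`|-|^𝒯`, `|-|^Σ` is a pullback of categories (since all four are full/faithful
over `Σ-Alg` resp. `|Σ|-Alg`, this amounts to: a `Σ`-algebra is a `𝒯`-algebra iff
its underlying `|Σ|`-algebra is a `|𝒯|`-algebra); `|-|^𝒯 : 𝒯-Alg → |𝒯|-Alg` is
topological; and `U^𝒯 : 𝒯-Alg → 𝒱^𝒮` sends `|-|^𝒯`-initial sources to
`|-|^𝒮`-initial sources. -/
theorem statement11 (V : TopConstruct.{u}) (M : MonStr V) {S : Type u} (Sg : VSig V S)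
    (E : Set (AlgEq V M Sg)) (E' : Set (SynEq Sg.toClass))
    (hE' : ∀ A : VAlg V M Sg, (∀ e ∈ E, VSat A e) ↔ ∀ e' ∈ E', ClsSat A.cls e') :
    -- (1) the square is a pullback: `A ∈ 𝒯-Alg ↔ |A| ∈ |𝒯|-Alg`
    (∀ A : VAlg V M Sg, (∀ e ∈ E, VSat A e) ↔ ∀ e' ∈ E', ClsSat A.cls e') ∧
    -- (2) `|-|^𝒯 : 𝒯-Alg → |𝒯|-Alg` is topological:
    -- every structured source over `|-|^𝒯` has an initial lift
    (∀ B₀ : ClassAlg Sg.toClass, (∀ e' ∈ E', ClsSat B₀ e') →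
      ∀ (I : Type (u + 1)) (A : I → VAlg V M Sg), (∀ i, ∀ e ∈ E, VSat (A i) e) →
      ∀ f : ∀ i, ∀ s, B₀.car s → (A i).car s, (∀ i, IsClsHom B₀ (A i).cls (f i)) →
      ∃ st : ∀ s, V.Str (B₀.car s),
        (∀ σ : Sg.Op,
          V.Adm (M.tens (Sg.parS σ) (V.piStrF fun i => st ((Sg.ar σ).get i)))
            (st (Sg.out σ)) fun pts => B₀.op ⟨σ, pts.1⟩ pts.2) ∧
        (∀ i s, V.Adm (st s) ((A i).str s) (f i s)) ∧
        (∀ W : VAlg V M Sg, (∀ e ∈ E, VSat W e) →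
          ∀ g : ∀ s, W.car s → B₀.car s, IsClsHom W.cls B₀ g →
          (∀ i s, V.Adm (W.str s) ((A i).str s) fun x => f i s (g s x)) →
          ∀ s, V.Adm (W.str s) (st s) (g s))) ∧
    -- (3) `U^𝒯` sends `|-|^𝒯`-initial sources to `|-|^𝒮`-initial sources
    (∀ A : VAlg V M Sg, (∀ e ∈ E, VSat A e) →
      ∀ (I : Type (u + 1)) (Ai : I → VAlg V M Sg), (∀ i, ∀ e ∈ E, VSat (Ai i) e) →
      ∀ f : ∀ i, ∀ s, A.car s → (Ai i).car s, (∀ i, IsVHom A (Ai i) (f i)) →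
      (∀ W : VAlg V M Sg, (∀ e ∈ E, VSat W e) →
        ∀ g : ∀ s, W.car s → A.car s, IsClsHom W.cls A.cls g →
        (∀ i s, V.Adm (W.str s) ((Ai i).str s) fun x => f i s (g s x)) →
        ∀ s, V.Adm (W.str s) (A.str s) (g s)) →
      ∀ (W : S → V.Obj) (g : ∀ s, (W s).1 → A.car s),
        (∀ i s, V.Adm (W s).2 ((Ai i).str s) fun x => f i s (g s x)) →
        ∀ s, V.Adm (W s).2 (A.str s) (g s)) := by
  refine ⟨hE', ?_, ?_⟩
  · intro B₀ _ I A hAE f hf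
    refine ⟨fun s => V.iLift (fun i => (A i).car s) (fun i => (A i).str s) (fun i => f i s),
      fun σ => lift_op_adm V M Sg B₀ A f hf σ,
      fun i s => V.iLift_adm _ _ _ i, ?_⟩
    intro W _ g _ hcomp s
    exact V.iLift_initial _ _ _ _ _ (fun i => hcomp i s)
  · intro A hA I Ai hAi f hf hinit W g hcomp s
    -- the pointwise initial lift
    set st : ∀ s, V.Str (A.car s) :=
      fun s => V.iLift (fun i => (Ai i).car s) (fun i => (Ai i).str s) (fun i => f i s) with hst
    have hfcls : ∀ i, IsClsHom A.cls (Ai i).cls (f i) := fun i σ ts => (hf i).2 σ.1 σ.2 ts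
    -- the algebra with the lifted structure
    let W' : VAlg V M Sg :=
      { car := A.car, str := st, op := A.op,
        op_adm := fun σ => lift_op_adm V M Sg A.cls Ai f hfcls σ }
    have hW'E : ∀ e ∈ E, VSat W' e := by
      refine (hE' W').mpr ?_
      exact (hE' A).mp hA
    have hid : V.Adm (st s) (A.str s) id := by
      refine hinit W' hW'E (fun _ => id) (fun σ ts => rfl) ?_ s
      intro i s'
      exact V.iLift_adm _ _ _ i
    have hg : V.Adm (W s).2 (st s) (g s) :=
      V.iLift_initial _ _ _ _ _ (fun i => hcomp i s)
    have h3 := V.adm_comp hg hid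
    exact h3
end

section
/- Let 𝒯 = (Σ, ℰ) be a 𝒱-enriched 𝒮-sorted equational theory with underlying classical 𝒮-sorted equational theory |𝒯| = (|Σ|, |ℰ|). Then U^𝒯 : 𝒯-Alg → 𝒱^𝒮 has a left adjoint F^𝒯 : 𝒱^𝒮 → 𝒯-Alg, and the adjunction F^𝒯 ⊣ U^𝒯 is a lifting of the adjunction F^{|𝒯|} ⊣ U^{|𝒯|} : |𝒯|-Alg → Set^𝒮; in particular |-|^𝒯 ∘ F^𝒯 = F^{|𝒯|} ∘ |-|^𝒮 strictly. For each 𝒮-sorted object X of 𝒱, the free 𝒯-algebra F^𝒯 X is the domain of the initial lift of the |-|^𝒯-structured source (f^♯ : F^{|𝒯|}|X| → |A|^𝒯) indexed by all pairs (A, f : X → U^𝒯 A) with A a 𝒯-algebra; in particular the carrier U^𝒯 F^𝒯 X is the domain of the initial lift of the |-|^𝒮-structured source (f^♯ : Term_{|Σ|}(|X|)/∼^{|ℰ|} → |A|^𝒮), where ∼^{|ℰ|} is the |Σ|-congruence on F^{|Σ|}(|X|) generated by |ℰ|. -/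
universe u

universe v

/-- The carrier `Term_{|Σ|}(|X|)/∼^{|ℰ|}` of the free `|𝒯|`-algebra on `|X|`:
the quotient of the `𝒮`-sorted set of ground `|Σ|`-terms with constants from
`|X|` by the `|Σ|`-congruence on the term algebra generated by `|ℰ| = E'`. -/
def QCar (V : TopConstruct.{u}) {S : Type u} (Sg : VSig V S)
    (E' : Set (SynEq Sg.toClass)) (X : S → V.Obj) (s : S) : Type u :=
  Quot (congGen (termAlg Sg.toClass fun s => (X s).1) E' s)
/-- The index family of the `|-|^𝒯`-structured source of all adjoint transposes
`f^♯ : F^{|𝒯|}|X| → |A|^𝒯` of pairs `(A, f : X → U^𝒯 A)` with `A` a `𝒯`-algebra. -/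
def FreeTSrc (V : TopConstruct.{u}) (M : MonStr V) {S : Type u} (Sg : VSig V S)
    (E : Set (AlgEq V M Sg)) (X : S → V.Obj) : Type (u + 1) :=
  (A : {A : VAlg V M Sg // ∀ e ∈ E, VSat A e}) ×
    {f : ∀ s, (X s).1 → A.1.car s // ∀ s, V.Adm (X s).2 (A.1.str s) (f s)}

/-!
The free `𝒯`-algebra on `X` is the free `|𝒯|`-algebra `Term_{|Σ|}(|X|)/∼^{|ℰ|}` equipped with the
initial structure for the source of all transposes `f^♯ : F^{|𝒯|}|X| → |A|`. Since `A` satisfies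
`|ℰ|`, each `f^♯` is well defined on the quotient and is a `|Σ|`-homomorphism, so its composite
with an operation of the quotient factors through the admissible operation of `A`: by initiality
the operations are admissible, and so is the unit because every `f` is. Freeness is then the
classical freeness of the quotient term algebra, the transposes being admissible by construction.
-/

namespace IsClsHom

variable {S : Type u} {Sg : ClassSig S} {A B C : ClassAlg Sg}

theorem comp {g : ∀ s, B.car s → C.car s} {h : ∀ s, A.car s → B.car s}
    (hg : IsClsHom B C g) (hh : IsClsHom A B h) : IsClsHom A C fun s a => g s (h s a) :=
  fun σ ts => (congrArg (g _) (hh σ ts)).trans (hg σ _)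

theorem extend {h : ∀ s, B.car s → C.car s} (hh : IsClsHom B C h) {X : S → Type v}
    (f : ∀ s, X s → B.car s) :
    ∀ {s : S} (t : Tm Sg X s), h s (Tm.extend B f t) = Tm.extend C (fun s x => h s (f s x)) t
  | _, .var _ => rfl
  | _, .app σ ts => (hh σ _).trans (congrArg (C.op σ) (funext fun i => hh.extend f (ts i)))

theorem ctxInterp {h : ∀ s, B.car s → C.car s} (hh : IsClsHom B C h) {Γ : List S} {s : S}
    (t : Tm Sg (CtxVar Γ) s) (as : ∀ i : Fin Γ.length, B.car (Γ.get i)) :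
    h s (ctxInterp B t as) = ctxInterp C t fun i => h _ (as i) := by
  refine (hh.extend _ t).trans (congrArg (fun f => Tm.extend C f t) ?_)
  funext s' ⟨i, hi⟩
  subst hi
  rfl

theorem eq_of_congGen {h : ∀ s, B.car s → C.car s} (hh : IsClsHom B C h) {E' : Set (SynEq Sg)}
    (hC : ∀ e ∈ E', ClsSat C e) {s : S} {a b : B.car s} (hab : congGen B E' s a b) :
    h s a = h s b := by
  refine hab (fun s a b => h s a = h s b) ⟨fun s => ⟨fun _ => rfl, Eq.symm, Eq.trans⟩, ?_⟩ ?_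
  · intro σ ts us hts
    rw [hh, hh, funext hts]
  · intro e he as
    rw [hh.ctxInterp, hh.ctxInterp]
    exact hC e he _

end IsClsHom

section TermAlgebra

variable {S : Type u} {Sg : ClassSig S} {X : S → Type u}

theorem Tm.extend_isClsHom (B : ClassAlg Sg) (f : ∀ s, X s → B.car s) :
    IsClsHom (termAlg Sg X) B fun _ => Tm.extend B f :=
  fun _ _ => rfl

theorem Tm.hom_ext {B : ClassAlg Sg} {h₁ h₂ : ∀ s, Tm Sg X s → B.car s}
    (hh₁ : IsClsHom (termAlg Sg X) B h₁) (hh₂ : IsClsHom (termAlg Sg X) B h₂)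
    (hvar : ∀ s (x : X s), h₁ s (.var x) = h₂ s (.var x)) {s : S} (t : Tm Sg X s) :
    h₁ s t = h₂ s t := by
  induction t with
  | var x => exact hvar _ x
  | app σ ts ih => exact (hh₁ σ ts).trans ((congrArg (B.op σ) (funext ih)).trans (hh₂ σ ts).symm)

end TermAlgebra

namespace ClassAlg

variable {S : Type u} {Sg : ClassSig S}

theorem congGen_isClsCong (B : ClassAlg Sg) (E' : Set (SynEq Sg)) : IsClsCong B (congGen B E') :=
  ⟨fun s => ⟨fun a _ hr _ => (hr.1 s).refl a,
    fun h r hr hE => (hr.1 _).symm (h r hr hE),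
    fun h₁ h₂ r hr hE => (hr.1 _).trans (h₁ r hr hE) (h₂ r hr hE)⟩,
   fun σ ts us h r hr hE => hr.2 σ ts us fun i => h i r hr hE⟩

noncomputable def quot (B : ClassAlg Sg) (E' : Set (SynEq Sg)) : ClassAlg Sg :=
  ⟨fun s => Quot (congGen B E' s), fun σ ts => Quot.mk _ (B.op σ fun i => (ts i).out)⟩

theorem quot_mk_isClsHom (B : ClassAlg Sg) (E' : Set (SynEq Sg)) :
    IsClsHom B (B.quot E') fun _ => Quot.mk _ := by
  intro σ ts
  refine Quot.sound ((congGen_isClsCong B E').2 σ _ _ fun i => ?_)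
  exact ((congGen_isClsCong B E').1 _).eqvGen_iff.1 (Quot.eqvGen_exact (Quot.out_eq _)).symm

theorem quot_clsSat (B : ClassAlg Sg) (E' : Set (SynEq Sg)) : ∀ e ∈ E', ClsSat (B.quot E') e := by
  intro e he as
  have has : as = fun i => Quot.mk _ (as i).out := funext fun i => (Quot.out_eq _).symm
  rw [has, ← (quot_mk_isClsHom B E').ctxInterp, ← (quot_mk_isClsHom B E').ctxInterp]
  exact Quot.sound fun _ _ hE => hE e he _

noncomputable def quotLift {B C : ClassAlg Sg} {E' : Set (SynEq Sg)} {h : ∀ s, B.car s → C.car s}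
    (hh : IsClsHom B C h) (hC : ∀ e ∈ E', ClsSat C e) : ∀ s, (B.quot E').car s → C.car s :=
  fun s => Quot.lift (h s) fun _ _ => hh.eq_of_congGen hC

variable {B C : ClassAlg Sg} {E' : Set (SynEq Sg)}

theorem quotLift_isClsHom {h : ∀ s, B.car s → C.car s} (hh : IsClsHom B C h)
    (hC : ∀ e ∈ E', ClsSat C e) : IsClsHom (B.quot E') C (quotLift hh hC) := by
  intro σ ts
  refine (hh σ _).trans (congrArg (C.op σ) (funext fun i => ?_))
  exact congrArg (quotLift hh hC _) (Quot.out_eq (ts i))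

theorem quot_hom_ext {X : S → Type u} {h₁ h₂ : ∀ s, ((termAlg Sg X).quot E').car s → C.car s}
    (hh₁ : IsClsHom _ C h₁) (hh₂ : IsClsHom _ C h₂)
    (hvar : ∀ s (x : X s), h₁ s (Quot.mk _ (.var x)) = h₂ s (Quot.mk _ (.var x))) : h₁ = h₂ := by
  funext s a
  induction a using Quot.ind with
  | mk t =>
    exact Tm.hom_ext (hh₁.comp (quot_mk_isClsHom _ E')) (hh₂.comp (quot_mk_isClsHom _ E')) hvar t

end ClassAlg

theorem TopConstruct.adm_piStrF_map (V : TopConstruct.{u}) {I : Type} {T T' : I → Type u}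
    {t : ∀ i, V.Str (T i)} {t' : ∀ i, V.Str (T' i)} {f : ∀ i, T i → T' i}
    (hf : ∀ i, V.Adm (t i) (t' i) (f i)) :
    V.Adm (V.piStrF t) (V.piStrF t') fun g i => f i (g i) :=
  V.iLift_initial _ _ _ _ _ fun i => V.adm_comp (V.iLift_adm _ _ _ i) (hf i.down)

def VAlg.initialLift {V : TopConstruct.{u}} {M : MonStr V} {S : Type u} {Sg : VSig V S}
    (B : ClassAlg Sg.toClass) {I : Type (u + 1)} (A : I → VAlg V M Sg)
    (h : ∀ i s, B.car s → (A i).car s) (hh : ∀ i, IsClsHom B (A i).cls (h i)) :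
    VAlg V M Sg where
  car := B.car
  str s := V.iLift (fun i => (A i).car s) (fun i => (A i).str s) fun i => h i s
  op σ pts := B.op ⟨σ, pts.1⟩ pts.2
  op_adm σ := by
    refine V.iLift_initial _ _ _ _ _ fun i => ?_
    have hadm := V.adm_comp (M.tens_adm (V.adm_id (Sg.parS σ)) (V.adm_piStrF_map fun j =>
      V.iLift_adm (fun i => (A i).car _) (fun i => (A i).str _) (fun i => h i _) i))
      ((A i).op_adm σ)
    convert hadm using 1
    exact funext fun pts => hh i ⟨σ, pts.1⟩ pts.2

/-- `U^𝒯 : 𝒯-Alg → 𝒱^𝒮` has a left adjoint `F^𝒯` and the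
adjunction `F^𝒯 ⊣ U^𝒯` is a lifting of `F^{|𝒯|} ⊣ U^{|𝒯|}`; in particular
`|-|^𝒯 ∘ F^𝒯 = F^{|𝒯|} ∘ |-|^𝒮` strictly.  For each `𝒮`-sorted object `X`, the
free `𝒯`-algebra `F^𝒯 X` is the domain of the initial lift of the
`|-|^𝒯`-structured source of transposes `f^♯ : F^{|𝒯|}|X| → |A|^𝒯`; in
particular its carrier is the domain of the initial lift of the
`|-|^𝒮`-structured source `(f^♯ : Term_{|Σ|}(|X|)/∼^{|ℰ|} → |A|^𝒮)`. -/
theorem statement12 (V : TopConstruct.{u}) (M : MonStr V) {S : Type u} (Sg : VSig V S)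
    (E : Set (AlgEq V M Sg)) (E' : Set (SynEq Sg.toClass))
    (hE' : ∀ A : VAlg V M Sg, (∀ e ∈ E, VSat A e) ↔ ∀ e' ∈ E', ClsSat A.cls e')
    (X : S → V.Obj) :
    ∃ (ωT : ∀ s, V.Str (QCar V Sg E' X s))
      (qop : ∀ σ : Sg.Op,
        Sg.parC σ × (∀ i : Fin (Sg.ar σ).length, QCar V Sg E' X ((Sg.ar σ).get i)) →
          QCar V Sg E' X (Sg.out σ)),
      -- (i) strict lifting: the underlying classical algebra of `F^𝒯 X` is the
      -- free `|𝒯|`-algebra `F^{|𝒯|}|X|` (the quotient of the term algebra)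
      (∀ (σ : Sg.Op) (p : Sg.parC σ) ts,
        qop σ (p, fun i => Quot.mk _ (ts i)) =
          Quot.mk _ (Tm.app (Sg := Sg.toClass) ⟨σ, p⟩ ts)) ∧
      -- (ii) the operations are admissible
      (∀ σ : Sg.Op,
        V.Adm (M.tens (Sg.parS σ) (V.piStrF fun i => ωT ((Sg.ar σ).get i)))
          (ωT (Sg.out σ)) (qop σ)) ∧
      -- (iii) the unit `η : X → U^𝒯 F^𝒯 X` is admissible
      (∀ s, V.Adm (X s).2 (ωT s) fun x => Quot.mk _ (Tm.var x)) ∧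
      -- (iv) `F^𝒯 X` is a `𝒯`-algebra (its underlying classical algebra is a
      -- `|𝒯|`-algebra)
      (∀ e' ∈ E',
        ClsSat (⟨fun s => QCar V Sg E' X s, fun σ ts => qop σ.1 (σ.2, ts)⟩ :
          ClassAlg Sg.toClass) e') ∧
      -- (v) freeness: `F^𝒯 X` is the free `𝒯`-algebra on `X`
      (∀ A : VAlg V M Sg, (∀ e ∈ E, VSat A e) →
        ∀ f : ∀ s, (X s).1 → A.car s, (∀ s, V.Adm (X s).2 (A.str s) (f s)) →
        ∃! h : ∀ s, QCar V Sg E' X s → A.car s,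
          (∀ s, V.Adm (ωT s) (A.str s) (h s)) ∧
          (∀ (σ : Sg.Op) (p : Sg.parC σ) ts,
            h _ (qop σ (p, ts)) = A.op σ (p, fun i => h _ (ts i))) ∧
          ∀ s x, h s (Quot.mk _ (Tm.var x)) = f s x) ∧
      -- (vi) `F^𝒯 X` is the domain of the initial lift of the structured source
      -- of the transposes `f^♯` over all pairs `(A, f)` with `A` a `𝒯`-algebra
      (∀ H : ∀ q : FreeTSrc V M Sg E X, ∀ s, QCar V Sg E' X s → q.1.1.car s,
        (∀ q s t, H q s (Quot.mk _ t) = Tm.extend q.1.1.cls q.2.1 t) →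
        ∀ s, ωT s = V.iLift (I := FreeTSrc V M Sg E X)
          (fun q => q.1.1.car s) (fun q => q.1.1.str s) fun q => H q s) := by
  set T := termAlg Sg.toClass fun s => (X s).1
  have hsat (q : FreeTSrc V M Sg E X) : ∀ e' ∈ E', ClsSat q.1.1.cls e' := (hE' q.1.1).1 q.1.2
  let transpose (q : FreeTSrc V M Sg E X) : ∀ s, (T.quot E').car s → q.1.1.car s :=
    ClassAlg.quotLift (Tm.extend_isClsHom q.1.1.cls q.2.1) (hsat q)
  have htranspose (q : FreeTSrc V M Sg E X) : IsClsHom (T.quot E') q.1.1.cls (transpose q) :=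
    ClassAlg.quotLift_isClsHom _ _
  let F := VAlg.initialLift (M := M) (T.quot E') (fun q : FreeTSrc V M Sg E X => q.1.1)
    transpose htranspose
  refine ⟨F.str, F.op, fun σ p ts => (T.quot_mk_isClsHom E' ⟨σ, p⟩ ts).symm, F.op_adm,
    fun s => V.iLift_initial _ _ _ _ _ fun q => q.2.2 s, T.quot_clsSat E', ?_, ?_⟩
  · intro A hA f hf
    let q : FreeTSrc V M Sg E X := ⟨⟨A, hA⟩, ⟨f, hf⟩⟩
    refine ⟨transpose q, ⟨fun s => V.iLift_adm _ _ _ q, fun σ p => htranspose q ⟨σ, p⟩,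
      fun s x => rfl⟩, ?_⟩
    rintro h ⟨-, hop, hvar⟩
    have hhom : IsClsHom (T.quot E') A.cls h := fun σ => hop σ.1 σ.2
    exact ClassAlg.quot_hom_ext hhom (htranspose q) hvar
  · intro H hH
    obtain rfl : H = transpose :=
      funext fun q => funext fun s => funext (Quot.ind (hH q s))
    exact fun s => rfl
end

section
/- Let 𝒯 = (Σ, ℰ) be a 𝒱-enriched 𝒮-sorted equational theory with underlying classical 𝒮-sorted equational theory |𝒯| = (|Σ|, |ℰ|), and let X be an 𝒮-sorted object of 𝒱. Then the carrier U^𝒯 F^𝒯 X of the free 𝒯-algebra on X is the infimum, in the fibre of 𝒱^𝒮 over the 𝒮-sorted set Term_{|Σ|}(|X|)/∼^{|ℰ|} (the carrier of the free |𝒯|-algebra on |X|), of all elements of that fibre that are 𝒯-compatible with X. -/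
universe u

universe v

/-- `𝒯`-compatibility with `X` of an element `B` of the fibre of `𝒱^𝒮` over
`Term_{|Σ|}(|X|)/∼^{|ℰ|}`: (1) the `𝒮`-sorted unit function lifts to a
`𝒱^𝒮`-morphism `X → B`, and (2) for each `σ ∈ Σ` of type `((S₁,…,Sₙ), S, P)` the
function `(p, [t₁],…,[tₙ]) ↦ [σ_p(t₁,…,tₙ)]` lifts to a `𝒱`-morphism
`P ⊗ (B_{S₁} × ⋯ × B_{Sₙ}) → B_S`. -/
def TCompat (V : TopConstruct.{u}) (M : MonStr V) {S : Type u} (Sg : VSig V S)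
    (E' : Set (SynEq Sg.toClass)) (X : S → V.Obj)
    (B : ∀ s, V.Str (QCar V Sg E' X s)) : Prop :=
  (∀ s, V.Adm (X s).2 (B s) fun x => Quot.mk _ (Tm.var x)) ∧
    ∀ σ : Sg.Op,
      ∃ g : Sg.parC σ × (∀ i : Fin (Sg.ar σ).length, QCar V Sg E' X ((Sg.ar σ).get i)) →
          QCar V Sg E' X (Sg.out σ),
        (∀ (p : Sg.parC σ) ts,
          g (p, fun i => Quot.mk _ (ts i)) =
            Quot.mk _ (Tm.app (Sg := Sg.toClass) ⟨σ, p⟩ ts)) ∧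
        V.Adm (M.tens (Sg.parS σ) (V.piStrF fun i => B ((Sg.ar σ).get i)))
          (B (Sg.out σ)) g

/-! The structure `ωT` of the free algebra is itself compatible, and it lies below every
compatible `B`: the operations of `B` are forced to be those of the free `|𝒯|`-algebra, so
`B` makes the quotient term algebra into a `Σ`-algebra satisfying `|ℰ|`, hence `ℰ`. The
free extension of the unit `X → B` is then a homomorphism of the quotient term algebra
fixing the generators, i.e. the identity, which is therefore admissible `ωT → B`. -/

theorem TopConstruct.eq_fibInf_of_forall_fibLe {V : TopConstruct.{u}} {X : Type u}
    {I : Type (u + 1)} (t : I → V.Str X) (i₀ : I) (hle : ∀ i, V.fibLe (t i₀) (t i)) :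
    t i₀ = V.fibInf t :=
  V.amnestic _ _ (V.iLift_initial _ _ _ _ _ hle) (V.iLift_adm _ _ _ i₀)

theorem Quot.funext_prod_pi {P ι Y : Type*} {α : ι → Type*} {r : ∀ i, α i → α i → Prop}
    {f g : P × (∀ i, Quot (r i)) → Y}
    (h : ∀ p (ts : ∀ i, α i),
      f (p, fun i => Quot.mk _ (ts i)) = g (p, fun i => Quot.mk _ (ts i))) :
    f = g := by
  funext ⟨p, qs⟩
  choose ts hts using fun i => Quot.exists_rep (qs i)
  obtain rfl : (fun i => Quot.mk _ (ts i)) = qs := funext hts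
  exact h p ts

section QuotientTermAlgebra

variable {V : TopConstruct.{u}} {M : MonStr V} {S : Type u} {Sg : VSig V S}
  {E' : Set (SynEq Sg.toClass)} {X : S → V.Obj}
  {qop : ∀ σ : Sg.Op,
    Sg.parC σ × (∀ i : Fin (Sg.ar σ).length, QCar V Sg E' X ((Sg.ar σ).get i)) →
      QCar V Sg E' X (Sg.out σ)}

/-- The lift `g` in a compatibility witness agrees with `qop` on representatives,
so it is `qop`. -/
theorem TCompat.adm_op
    (hq : ∀ (σ : Sg.Op) (p : Sg.parC σ) ts,
      qop σ (p, fun i => Quot.mk _ (ts i)) = Quot.mk _ (Tm.app (Sg := Sg.toClass) ⟨σ, p⟩ ts))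
    {B : ∀ s, V.Str (QCar V Sg E' X s)} (hB : TCompat V M Sg E' X B) (σ : Sg.Op) :
    V.Adm (M.tens (Sg.parS σ) (V.piStrF fun i => B ((Sg.ar σ).get i))) (B (Sg.out σ))
      (qop σ) := by
  obtain ⟨g, hg, hadm⟩ := hB.2 σ
  obtain rfl : g = qop σ := Quot.funext_prod_pi fun p ts => (hg p ts).trans (hq σ p ts).symm
  exact hadm

def TCompat.toVAlg
    (hq : ∀ (σ : Sg.Op) (p : Sg.parC σ) ts,
      qop σ (p, fun i => Quot.mk _ (ts i)) = Quot.mk _ (Tm.app (Sg := Sg.toClass) ⟨σ, p⟩ ts))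
    {B : ∀ s, V.Str (QCar V Sg E' X s)} (hB : TCompat V M Sg E' X B) : VAlg V M Sg :=
  ⟨QCar V Sg E' X, B, qop, hB.adm_op hq⟩

theorem QCar.eq_id_of_map_var
    (hq : ∀ (σ : Sg.Op) (p : Sg.parC σ) ts,
      qop σ (p, fun i => Quot.mk _ (ts i)) = Quot.mk _ (Tm.app (Sg := Sg.toClass) ⟨σ, p⟩ ts))
    (h : ∀ s, QCar V Sg E' X s → QCar V Sg E' X s)
    (hhom : ∀ (σ : Sg.Op) (p : Sg.parC σ) ts,
      h _ (qop σ (p, ts)) = qop σ (p, fun i => h _ (ts i)))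
    (hvar : ∀ s (x : (X s).1),
      h s (Quot.mk _ (Tm.var (Sg := Sg.toClass) x)) = Quot.mk _ (Tm.var (Sg := Sg.toClass) x))
    (s : S) :
    h s = id := by
  have hmk : ∀ s (t : Tm Sg.toClass (fun s => (X s).1) s), h s (Quot.mk _ t) = Quot.mk _ t := by
    intro s t
    induction t with
    | var x => exact hvar _ x
    | app σp ts ih =>
      obtain ⟨σ, p⟩ := σp
      show h (Sg.out σ) (Quot.mk _ (Tm.app (Sg := Sg.toClass) ⟨σ, p⟩ ts)) =
        Quot.mk _ (Tm.app (Sg := Sg.toClass) ⟨σ, p⟩ ts)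
      refine (congrArg (h _) (hq σ p ts).symm).trans ((hhom σ p _).trans ?_)
      exact (congrArg (fun ts' => qop σ (p, ts')) (funext ih)).trans (hq σ p ts)
  funext q
  induction q using Quot.ind
  exact hmk s _

end QuotientTermAlgebra

/-- The carrier `U^𝒯 F^𝒯 X` of the free `𝒯`-algebra on `X` is the
infimum, in the fibre of `𝒱^𝒮` over the carrier `Term_{|Σ|}(|X|)/∼^{|ℰ|}` of the
free `|𝒯|`-algebra on `|X|`, of all the elements of that fibre that are
`𝒯`-compatible with `X`.  (Here `(ωT, qop)` is the free `𝒯`-algebra on `X`,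
hypothesized through its characterizing properties.) -/
theorem statement13 (V : TopConstruct.{u}) (M : MonStr V) {S : Type u} (Sg : VSig V S)
    (E : Set (AlgEq V M Sg)) (E' : Set (SynEq Sg.toClass))
    (hE' : ∀ A : VAlg V M Sg, (∀ e ∈ E, VSat A e) ↔ ∀ e' ∈ E', ClsSat A.cls e')
    (X : S → V.Obj)
    (ωT : ∀ s, V.Str (QCar V Sg E' X s))
    (qop : ∀ σ : Sg.Op,
      Sg.parC σ × (∀ i : Fin (Sg.ar σ).length, QCar V Sg E' X ((Sg.ar σ).get i)) →
        QCar V Sg E' X (Sg.out σ))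
    -- the underlying classical algebra of `F^𝒯 X` is the free `|𝒯|`-algebra:
    (hq : ∀ (σ : Sg.Op) (p : Sg.parC σ) ts,
      qop σ (p, fun i => Quot.mk _ (ts i)) =
        Quot.mk _ (Tm.app (Sg := Sg.toClass) ⟨σ, p⟩ ts))
    -- the operations of `F^𝒯 X` are admissible:
    (hadm : ∀ σ : Sg.Op,
      V.Adm (M.tens (Sg.parS σ) (V.piStrF fun i => ωT ((Sg.ar σ).get i)))
        (ωT (Sg.out σ)) (qop σ))
    -- the unit of `F^𝒯 X` is admissible:
    (hη : ∀ s, V.Adm (X s).2 (ωT s) fun x => Quot.mk _ (Tm.var x))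
    -- `F^𝒯 X` is a `𝒯`-algebra:
    (hT : ∀ e' ∈ E',
      ClsSat (⟨fun s => QCar V Sg E' X s, fun σ ts => qop σ.1 (σ.2, ts)⟩ :
        ClassAlg Sg.toClass) e')
    -- `F^𝒯 X` is free on `X` among `𝒯`-algebras:
    (hfree : ∀ A : VAlg V M Sg, (∀ e ∈ E, VSat A e) →
      ∀ f : ∀ s, (X s).1 → A.car s, (∀ s, V.Adm (X s).2 (A.str s) (f s)) →
      ∃! h : ∀ s, QCar V Sg E' X s → A.car s,
        (∀ s, V.Adm (ωT s) (A.str s) (h s)) ∧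
        (∀ (σ : Sg.Op) (p : Sg.parC σ) ts,
          h _ (qop σ (p, ts)) = A.op σ (p, fun i => h _ (ts i))) ∧
        ∀ s x, h s (Quot.mk _ (Tm.var x)) = f s x) :
    ∀ s, ωT s =
      V.fibInf (I := {B : ∀ s, V.Str (QCar V Sg E' X s) // TCompat V M Sg E' X B})
        fun B => B.1 s := by
  have hωT : TCompat V M Sg E' X ωT := ⟨hη, fun σ => ⟨qop σ, hq σ, hadm σ⟩⟩
  have hmin : ∀ B (hB : TCompat V M Sg E' X B) s, V.fibLe (ωT s) (B s) := by
    intro B hB s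
    obtain ⟨h, ⟨hadm_h, hhom, hvar⟩, -⟩ := hfree (hB.toVAlg hq) ((hE' _).2 hT)
      (fun s x => Quot.mk _ (Tm.var x)) hB.1
    have hh := hadm_h s
    rwa [QCar.eq_id_of_map_var hq h hhom hvar s] at hh
  exact fun s => TopConstruct.eq_fibInf_of_forall_fibLe
    (fun B : {B // TCompat V M Sg E' X B} => B.1 s) ⟨ωT, hωT⟩ fun B => hmin B.1 B.2 s
end
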